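/- arXiv:2310.19007 — 2 statements merged into one kernel-verified Lean document; each statement's English description precedes it below -/
import Mathlib

section
/- If Φ(s) > 2·r(s,a) for all actions a and Φ(s) > 0, then in the single-step bandit the variance of the potential-shaped update ψ(A)(r(s,A)−Φ(s)) is at least the variance of the unshaped update ψ(A)r(s,A). -/
/-! Since `E_π[ψ(A)] = 0`, subtracting the constant `Φ` from the reward leaves the mean of the
update unchanged, so only the second moments differ. These compare pointwise:
`(r - Φ)² - r² = Φ (Φ - 2 r) ≥ 0`. -/

open Finset

theorem sum_mul_mul_sub_const_of_sum_mul_eq_zero {ι : Type*} (s : Finset ι) (π ψ r : ι → ℝ)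
    (c : ℝ) (hψ : ∑ a ∈ s, π a * ψ a = 0) :
    ∑ a ∈ s, π a * (ψ a * (r a - c)) = ∑ a ∈ s, π a * (ψ a * r a) := by
  have hsplit : ∑ a ∈ s, π a * (ψ a * (r a - c))
      = ∑ a ∈ s, π a * (ψ a * r a) - c * ∑ a ∈ s, π a * ψ a := by
    rw [mul_sum, ← sum_sub_distrib]
    exact sum_congr rfl fun a _ => by ring
  rw [hsplit, hψ, mul_zero, sub_zero]

theorem sq_le_sq_sub_of_two_mul_le {r c : ℝ} (hc : 0 ≤ c) (hr : 2 * r ≤ c) :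
    r ^ 2 ≤ (r - c) ^ 2 := by
  nlinarith [mul_nonneg hc (sub_nonneg.mpr hr)]

theorem shaped_variance_ge_general {𝒜 : Type*} [Fintype 𝒜]
    (π ψ r : 𝒜 → ℝ) (Φ : ℝ)
    (hπ0 : ∀ a, 0 ≤ π a)
    (hψ : ∑ a, π a * ψ a = 0)
    (hΦ : 0 < Φ)
    (hr : ∀ a, 2 * r a < Φ) :
    (∑ a, π a * (ψ a * (r a - Φ)) ^ 2) - (∑ a, π a * (ψ a * (r a - Φ))) ^ 2
      ≥ (∑ a, π a * (ψ a * r a) ^ 2) - (∑ a, π a * (ψ a * r a)) ^ 2 := by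
  rw [sum_mul_mul_sub_const_of_sum_mul_eq_zero univ π ψ r Φ hψ]
  refine sub_le_sub_right (sum_le_sum fun a _ => mul_le_mul_of_nonneg_left ?_ (hπ0 a)) _
  rw [mul_pow, mul_pow]
  exact mul_le_mul_of_nonneg_left (sq_le_sq_sub_of_two_mul_le hΦ.le (hr a).le) (sq_nonneg _)

/-- If `Φ(s) > 2 r(s,a)` for all actions and `Φ(s) > 0`, then the variance of the
potential-shaped update is at least the variance of the unshaped update. -/
theorem shaped_variance_ge {𝒜 : Type*} [Fintype 𝒜]
    (π ψ r : 𝒜 → ℝ) (Φ : ℝ)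
    (hπ0 : ∀ a, 0 ≤ π a) (hπ1 : ∑ a, π a = 1)
    (hψ : ∑ a, π a * ψ a = 0)
    (hψnz : ∃ a, 0 < π a ∧ ψ a ≠ 0)
    (hΦ : 0 < Φ)
    (hr : ∀ a, 2 * r a < Φ) :
    (∑ a, π a * (ψ a * (r a - Φ)) ^ 2) - (∑ a, π a * (ψ a * (r a - Φ))) ^ 2
      ≥ (∑ a, π a * (ψ a * r a) ^ 2) - (∑ a, π a * (ψ a * r a)) ^ 2 :=
  shaped_variance_ge_general π ψ r Φ hπ0 hψ hΦ hr
end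

section
/- Tower-property decomposition of the policy gradient: for a finite-horizon trajectory distribution, E[∑_{t=0}^T γ^t ψ(S_t,A_t) ∑_{j=t}^T γ^{j−t} r(S_j,A_j)] = E[∑_{t=0}^T γ^t ψ(S_t,A_t) q(S_t,A_t)], where q(s,a) := E[∑_{j=t}^T γ^{j−t} r(S_j,A_j) | S_t = s, A_t = a] and the conditional expectation is time-homogeneous by the Markov property. -/
/-! After exchanging the expectation with the sum over `t`, fix `t`. The weight `γ ^ t ψ(S_t, A_t)`
is constant on each fibre `{(S_t, A_t) = (s, a)}`, and on that fibre the hypothesis replaces the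
`p`-weighted return from time `t` by `q(s, a)` times the fibre's mass: this is the tower property
for the σ-algebra generated by `(S_t, A_t)`. -/

open Finset

theorem sum_mul_comp_mul_eq_of_fiberwise {ι κ R : Type*} [DecidableEq κ] [CommSemiring R]
    (s : Finset ι) (g : ι → κ) (p X : ι → R) (f q : κ → R)
    (hq : ∀ b, ∑ i ∈ s with g i = b, p i * X i = q b * ∑ i ∈ s with g i = b, p i) :
    ∑ i ∈ s, p i * (f (g i) * X i) = ∑ i ∈ s, p i * (f (g i) * q (g i)) := by
  have on_fibre : ∀ b,
      ∑ i ∈ s with g i = b, p i * (f (g i) * X i) = f b * ∑ i ∈ s with g i = b, p i * X i := by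
    intro b
    rw [mul_sum]
    refine sum_congr rfl fun i hi => ?_
    rw [(mem_filter.1 hi).2]
    ring
  have maps_to : ∀ i ∈ s, g i ∈ s.image g := fun i hi => mem_image_of_mem g hi
  rw [← sum_fiberwise_of_maps_to maps_to, ← sum_fiberwise_of_maps_to maps_to]
  refine sum_congr rfl fun b _ => ?_
  rw [on_fibre, hq, mul_sum, mul_sum]
  refine sum_congr rfl fun i hi => ?_
  rw [(mem_filter.1 hi).2]
  ring

theorem tower_policy_gradient_general {S A Ω : Type*} [Fintype Ω]
    [DecidableEq S] [DecidableEq A]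
    (T : ℕ) (γ : ℝ)
    (p : Ω → ℝ)
    (traj : Ω → ℕ → S × A) (r ψ q : S → A → ℝ)
    (hq : ∀ t ∈ Finset.range (T + 1), ∀ s a,
      ∑ ω ∈ Finset.univ.filter (fun ω => traj ω t = (s, a)),
          p ω * ∑ j ∈ Finset.Icc t T, γ ^ (j - t) * r (traj ω j).1 (traj ω j).2
        = q s a * ∑ ω ∈ Finset.univ.filter (fun ω => traj ω t = (s, a)), p ω) :
    ∑ ω, p ω * ∑ t ∈ Finset.range (T + 1),
        γ ^ t * ψ (traj ω t).1 (traj ω t).2 *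
          ∑ j ∈ Finset.Icc t T, γ ^ (j - t) * r (traj ω j).1 (traj ω j).2
      = ∑ ω, p ω * ∑ t ∈ Finset.range (T + 1),
          γ ^ t * ψ (traj ω t).1 (traj ω t).2 * q (traj ω t).1 (traj ω t).2 := by
  simp only [mul_sum (s := range (T + 1))]
  rw [sum_comm, sum_comm (s := univ)]
  exact sum_congr rfl fun t ht => sum_mul_comp_mul_eq_of_fiberwise univ (traj · t) p
    (fun ω => ∑ j ∈ Icc t T, γ ^ (j - t) * r (traj ω j).1 (traj ω j).2)
    (fun sa => γ ^ t * ψ sa.1 sa.2) (fun sa => q sa.1 sa.2) fun ⟨s, a⟩ => hq t ht s a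

/-- Tower-property decomposition of the policy gradient over a finite trajectory space:
if `q(s,a)` is the (time-homogeneous) conditional expectation of the discounted return
from time `t` given `(S_t,A_t) = (s,a)` (stated here without division as
`E[1{(S_t,A_t)=(s,a)} G_t] = q(s,a) · P((S_t,A_t)=(s,a))`), then
`E[∑_t γ^t ψ(S_t,A_t) ∑_{j=t}^T γ^{j−t} r(S_j,A_j)] = E[∑_t γ^t ψ(S_t,A_t) q(S_t,A_t)]`. -/
theorem tower_policy_gradient {S A Ω : Type*} [Fintype S] [Fintype A] [Fintype Ω]
    [DecidableEq S] [DecidableEq A]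
    (T : ℕ) (γ : ℝ) (hγ0 : 0 ≤ γ) (hγ1 : γ ≤ 1)
    (p : Ω → ℝ) (hp : ∀ ω, 0 ≤ p ω) (hp1 : ∑ ω, p ω = 1)
    (traj : Ω → ℕ → S × A) (r ψ q : S → A → ℝ)
    (hq : ∀ t ∈ Finset.range (T + 1), ∀ s a,
      ∑ ω ∈ Finset.univ.filter (fun ω => traj ω t = (s, a)),
          p ω * ∑ j ∈ Finset.Icc t T, γ ^ (j - t) * r (traj ω j).1 (traj ω j).2
        = q s a * ∑ ω ∈ Finset.univ.filter (fun ω => traj ω t = (s, a)), p ω) :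
    ∑ ω, p ω * ∑ t ∈ Finset.range (T + 1),
        γ ^ t * ψ (traj ω t).1 (traj ω t).2 *
          ∑ j ∈ Finset.Icc t T, γ ^ (j - t) * r (traj ω j).1 (traj ω j).2
      = ∑ ω, p ω * ∑ t ∈ Finset.range (T + 1),
          γ ^ t * ψ (traj ω t).1 (traj ω t).2 * q (traj ω t).1 (traj ω t).2 :=
  tower_policy_gradient_general T γ p traj r ψ q hq
end
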